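/- arXiv:2103.15661 — 5 statements merged into one kernel-verified Lean document; each statement's English description precedes it below -/
import Mathlib

section
/- Let K be a field and let A = {H₁,…,Hₙ} be a central arrangement of n pairwise distinct hyperplanes in V = K^ℓ, with characteristic polynomial χ(A,t). Write χ(A,t) = ∑_{i≥0} cᵢ·(t−1)^i for its expansion in powers of (t−1) (with cᵢ ∈ ℤ). If cᵢ ≥ 0 for all i ≥ 0, then n ≤ ℓ. -/
open Polynomial

open scoped Classical in
/-- If the expansion of the characteristic polynomial of a central arrangement of `n`
pairwise distinct hyperplanes in `K^ℓ` in powers of `t - 1` has all coefficients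
nonnegative, then `n ≤ ℓ`. -/
theorem char_poly_taylor_nonneg_imp_card_le_dim
    {K : Type*} [Field K] (ℓ n : ℕ)
    (f : Fin n → ((Fin ℓ → K) →ₗ[K] K))
    (hf0 : ∀ i, f i ≠ 0)
    (hfp : ∀ i j, i ≠ j → ∀ c : K, f i ≠ c • f j)
    -- `L` is the intersection poset of the arrangement `A = {ker (f i)}`
    (L : Finset (Submodule K (Fin ℓ → K)))
    (hL : ∀ X, X ∈ L ↔ ∃ S : Finset (Fin n), X = ⨅ i ∈ S, LinearMap.ker (f i))
    -- `μ` is the Möbius function of `L` (ordered by reverse inclusion)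
    (μ : Submodule K (Fin ℓ → K) → ℤ)
    (hμtop : μ ⊤ = 1)
    (hμ : ∀ X ∈ L, X ≠ ⊤ → ∑ Y ∈ L.filter (fun Y => X ≤ Y), μ Y = 0)
    -- `χ` is the characteristic polynomial of the arrangement
    (χ : Polynomial ℤ)
    (hχ : χ = ∑ X ∈ L, Polynomial.C (μ X) * Polynomial.X ^ (Module.finrank K X))
    -- all the coefficients `cᵢ` of the expansion `χ = ∑ᵢ cᵢ (t-1)^i` are nonnegative
    (hc : ∀ i, 0 ≤ (χ.comp (Polynomial.X + 1)).coeff i) :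
    n ≤ ℓ := by
  classical
  rcases Nat.eq_zero_or_pos n with hn | hn
  · omega
  have i0 : Fin n := ⟨0, hn⟩
  have hℓ : 1 ≤ ℓ := by
    by_contra h
    have hl0 : ℓ = 0 := by omega
    subst hl0
    exact hf0 i0 (LinearMap.ext fun v => by
      rw [Subsingleton.elim v (0 : Fin 0 → K), map_zero, map_zero])
  obtain ⟨m, rfl⟩ : ∃ m, ℓ = m + 1 := ⟨ℓ - 1, by omega⟩
  have hVdim : Module.finrank K (Fin (m+1) → K) = m + 1 := Module.finrank_fin_fun K
  -- kernels have dimension m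
  have hker : ∀ i, Module.finrank K (LinearMap.ker (f i)) = m := by
    intro i
    have h1 : LinearMap.range (f i) ≠ ⊥ :=
      fun h => hf0 i (LinearMap.range_eq_bot.1 h)
    have hle : Module.finrank K (LinearMap.range (f i)) ≤ 1 := by
      simpa using Submodule.finrank_le (LinearMap.range (f i))
    have hpos : Module.finrank K (LinearMap.range (f i)) ≠ 0 := by
      simp only [ne_eq, Submodule.finrank_eq_zero]; exact h1
    have := LinearMap.finrank_range_add_finrank_ker (f i)
    rw [hVdim] at this
    omega
  have hker_ne_top : ∀ i, LinearMap.ker (f i) ≠ ⊤ := by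
    intro i h
    exact hf0 i (LinearMap.ker_eq_top.1 h)
  -- distinct kernels
  have hker_inj : ∀ i j, LinearMap.ker (f i) = LinearMap.ker (f j) → i = j := by
    intro i j hij
    by_contra hne
    obtain ⟨x, hx⟩ : ∃ x, f j x ≠ 0 := by
      by_contra h
      push_neg at h
      exact hf0 j (LinearMap.ext h)
    apply hfp i j hne (f i x * (f j x)⁻¹)
    refine LinearMap.ext fun v => ?_
    have hv : v - (f j v * (f j x)⁻¹) • x ∈ LinearMap.ker (f j) := by
      rw [LinearMap.mem_ker, map_sub, map_smul, smul_eq_mul, mul_assoc,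
        inv_mul_cancel₀ hx, mul_one, sub_self]
    rw [← hij, LinearMap.mem_ker, map_sub, map_smul, sub_eq_zero, smul_eq_mul] at hv
    simp only [LinearMap.smul_apply, smul_eq_mul]
    rw [hv]; ring
  have htopL : (⊤ : Submodule K (Fin (m+1) → K)) ∈ L := (hL ⊤).2 ⟨∅, by simp⟩
  have hkerL : ∀ i, LinearMap.ker (f i) ∈ L := fun i => (hL _).2 ⟨{i}, by simp⟩
  -- elements of L above a kernel
  have habove : ∀ i, ∀ Y ∈ L, LinearMap.ker (f i) ≤ Y →
      Y = LinearMap.ker (f i) ∨ Y = ⊤ := by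
    intro i Y hY hle
    obtain ⟨S, rfl⟩ := (hL Y).1 hY
    rcases S.eq_empty_or_nonempty with rfl | ⟨j, hj⟩
    · right; simp
    · left
      have h1 : (⨅ k ∈ S, LinearMap.ker (f k)) ≤ LinearMap.ker (f j) :=
        biInf_le _ hj
      have h2 : LinearMap.ker (f i) = LinearMap.ker (f j) :=
        Submodule.eq_of_le_of_finrank_eq (hle.trans h1) (by rw [hker, hker])
      exact le_antisymm (h1.trans h2.ge) hle
  -- μ of kernels
  have hμker : ∀ i, μ (LinearMap.ker (f i)) = -1 := by
    intro i
    have h0 := hμ _ (hkerL i) (hker_ne_top i)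
    have hfe : L.filter (fun Y => LinearMap.ker (f i) ≤ Y)
        = {LinearMap.ker (f i), ⊤} := by
      ext Y
      simp only [Finset.mem_filter, Finset.mem_insert, Finset.mem_singleton]
      constructor
      · rintro ⟨hY, hle⟩; exact habove i Y hY hle
      · rintro (rfl | rfl)
        exacts [⟨hkerL i, le_rfl⟩, ⟨htopL, le_top⟩]
    rw [hfe, Finset.sum_pair (hker_ne_top i), hμtop] at h0
    omega
  -- coefficients of χ from the arrangement
  have hcoeff : ∀ k, χ.coeff k
      = ∑ X ∈ L.filter (fun X : Submodule K (Fin (m+1) → K) => Module.finrank K X = k), μ X := by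
    intro k
    rw [hχ, finset_sum_coeff, Finset.sum_filter]
    apply Finset.sum_congr rfl
    intro X _
    rw [coeff_C_mul, coeff_X_pow]
    by_cases h : Module.finrank K X = k
    · subst h; simp
    · rw [if_neg (fun hh : k = _ => h hh.symm), mul_zero, if_neg h]
  have hcoeff_top : χ.coeff (m+1) = 1 := by
    rw [hcoeff]
    have : L.filter (fun X : Submodule K (Fin (m+1) → K) => Module.finrank K X = m+1) = {⊤} := by
      ext X
      simp only [Finset.mem_filter, Finset.mem_singleton]
      constructor
      · rintro ⟨hX, hdim⟩
        obtain ⟨S, rfl⟩ := (hL X).1 hX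
        rcases S.eq_empty_or_nonempty with rfl | ⟨j, hj⟩
        · simp
        · exfalso
          have h1 : (⨅ k ∈ S, LinearMap.ker (f k)) ≤ LinearMap.ker (f j) :=
            biInf_le _ hj
          have := Submodule.finrank_mono h1
          rw [hdim, hker] at this
          omega
      · rintro rfl
        refine ⟨htopL, ?_⟩
        rw [finrank_top, hVdim]
    rw [this, Finset.sum_singleton, hμtop]
  have hcoeff_m : χ.coeff m = -(n : ℤ) := by
    rw [hcoeff]
    have : L.filter (fun X : Submodule K (Fin (m+1) → K) => Module.finrank K X = m)
        = Finset.image (fun i => LinearMap.ker (f i)) Finset.univ := by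
      ext X
      simp only [Finset.mem_filter, Finset.mem_image, Finset.mem_univ, true_and]
      constructor
      · rintro ⟨hX, hdim⟩
        obtain ⟨S, rfl⟩ := (hL X).1 hX
        rcases S.eq_empty_or_nonempty with rfl | ⟨j, hj⟩
        · exfalso
          have he : (⨅ k ∈ (∅ : Finset (Fin n)), LinearMap.ker (f k)) = ⊤ := by
            simp
          rw [he, finrank_top, hVdim] at hdim
          omega
        · have h1 : (⨅ k ∈ S, LinearMap.ker (f k)) ≤ LinearMap.ker (f j) :=
            biInf_le _ hj
          exact ⟨j, (Submodule.eq_of_le_of_finrank_eq h1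
            (by rw [hdim, hker])).symm⟩
      · rintro ⟨i, rfl⟩
        exact ⟨hkerL i, hker i⟩
    rw [this, Finset.sum_image (fun i _ j _ h => hker_inj i j h)]
    simp [hμker]
  -- polynomial manipulation
  set ψ := χ.comp (X + 1) with hψdef
  have hχψ : χ = ψ.comp (X - 1) := by
    rw [hψdef, Polynomial.comp_assoc]
    simp
  have hdχ : χ.natDegree ≤ m + 1 := by
    rw [hχ]
    apply Polynomial.natDegree_sum_le_of_forall_le
    intro X hX
    refine (Polynomial.natDegree_C_mul_le _ _).trans ?_
    rw [natDegree_X_pow]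
    calc Module.finrank K X ≤ Module.finrank K (Fin (m+1) → K) :=
          Submodule.finrank_le X
      _ = m + 1 := hVdim
  have hdψ : ψ.natDegree < m + 2 := by
    have h1 : ψ.natDegree ≤ χ.natDegree * (X + 1 : ℤ[X]).natDegree :=
      Polynomial.natDegree_comp_le
    have h2 : (X + 1 : ℤ[X]).natDegree = 1 := by
      rw [← Polynomial.C_1]; exact Polynomial.natDegree_X_add_C 1
    rw [h2, mul_one] at h1
    omega
  have hsum : χ = ∑ i ∈ Finset.range (m+2), C (ψ.coeff i) * (X - 1)^i := by
    conv_lhs => rw [hχψ, ψ.as_sum_range' (m+2) hdψ]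
    rw [Polynomial.sum_comp]
    apply Finset.sum_congr rfl
    intro i _
    rw [Polynomial.monomial_comp]
  have hXsub : (X - 1 : ℤ[X]) = X + C (-1) := by
    rw [map_neg, Polynomial.C_1]; ring
  have hcoeff' : ∀ k, χ.coeff k
      = ∑ i ∈ Finset.range (m+2), ψ.coeff i * ((-1)^(i-k) * (i.choose k : ℤ)) := by
    intro k
    conv_lhs => rw [hsum]
    rw [finset_sum_coeff]
    apply Finset.sum_congr rfl
    intro i _
    rw [coeff_C_mul, hXsub, coeff_X_add_C_pow]
  -- identify coefficients
  have e1 : χ.coeff (m+1) = ψ.coeff (m+1) := by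
    rw [hcoeff' (m+1), Finset.sum_range_succ]
    have hz : ∑ i ∈ Finset.range (m+1),
        ψ.coeff i * ((-1:ℤ)^(i-(m+1)) * (i.choose (m+1) : ℤ)) = 0 := by
      apply Finset.sum_eq_zero
      intro i hi
      rw [Finset.mem_range] at hi
      rw [Nat.choose_eq_zero_of_lt hi]
      simp
    rw [hz, zero_add, Nat.sub_self, Nat.choose_self]
    simp
  have e2 : χ.coeff m = ψ.coeff m - (m+1 : ℤ) * ψ.coeff (m+1) := by
    rw [hcoeff' m, Finset.sum_range_succ, Finset.sum_range_succ]
    have hz : ∑ i ∈ Finset.range m,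
        ψ.coeff i * ((-1:ℤ)^(i-m) * (i.choose m : ℤ)) = 0 := by
      apply Finset.sum_eq_zero
      intro i hi
      rw [Finset.mem_range] at hi
      rw [Nat.choose_eq_zero_of_lt hi]
      simp
    have h3 : m + 1 - m = 1 := by omega
    rw [hz, zero_add, Nat.sub_self, Nat.choose_self, h3,
      Nat.choose_succ_self_right]
    push_cast
    ring
  have h1 : ψ.coeff (m+1) = 1 := by rw [← e1, hcoeff_top]
  have h2 := hc m
  rw [hcoeff_m, h1, mul_one] at e2
  omega
end

section
/- Let K be a field and let A = {H₁,…,Hₙ} be a central essential arrangement of n pairwise distinct hyperplanes in V = K^ℓ, i.e., ⋂_{i=1}^n Hᵢ = {0}. If the expansion χ(A,t) = ∑_{i≥0} cᵢ·(t−1)^i of the characteristic polynomial in powers of (t−1) has all coefficients cᵢ ≥ 0, then n = ℓ and the defining linear forms f₁,…,fₙ are linearly independent over K (i.e., A is the essential Boolean arrangement). -/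
open Polynomial

open scoped Classical in
lemma aux_exists_smul_eq_of_ker_le {K V : Type*} [Field K] [AddCommGroup V] [Module K V]
    (f g : V →ₗ[K] K) (hg : g ≠ 0) (h : LinearMap.ker g ≤ LinearMap.ker f) :
    ∃ c : K, f = c • g := by
  obtain ⟨y, hy⟩ : ∃ y, g y ≠ 0 := by
    by_contra hcon; push_neg at hcon
    exact hg (LinearMap.ext fun v => by simp [hcon])
  set x := (g y)⁻¹ • y with hxdef
  have hx : g x = 1 := by simp [hxdef, inv_mul_cancel₀ hy]
  refine ⟨f x, ?_⟩
  ext v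
  have hmem : v - g v • x ∈ LinearMap.ker g := by
    simp [hx]
  have h2 := h hmem
  simp only [LinearMap.mem_ker, map_sub, map_smul, smul_eq_mul, sub_eq_zero] at h2
  simp only [LinearMap.smul_apply, smul_eq_mul]
  rw [h2, mul_comm]

open scoped Classical in
/-- For a central *essential* arrangement of `n` pairwise distinct hyperplanes in `K^ℓ`,
if all the coefficients of the expansion of the characteristic polynomial in powers of
`t - 1` are nonnegative, then `n = ℓ` and the defining forms are linearly independent,
i.e. the arrangement is the essential Boolean arrangement. -/
theorem essential_char_poly_taylor_nonneg_imp_boolean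
    {K : Type*} [Field K] (ℓ n : ℕ)
    (f : Fin n → ((Fin ℓ → K) →ₗ[K] K))
    (hf0 : ∀ i, f i ≠ 0)
    (hfp : ∀ i j, i ≠ j → ∀ c : K, f i ≠ c • f j)
    -- the arrangement is essential
    (hess : (⨅ i, LinearMap.ker (f i)) = ⊥)
    -- `L` is the intersection poset of the arrangement `A = {ker (f i)}`
    (L : Finset (Submodule K (Fin ℓ → K)))
    (hL : ∀ X, X ∈ L ↔ ∃ S : Finset (Fin n), X = ⨅ i ∈ S, LinearMap.ker (f i))
    -- `μ` is the Möbius function of `L` (ordered by reverse inclusion)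
    (μ : Submodule K (Fin ℓ → K) → ℤ)
    (hμtop : μ ⊤ = 1)
    (hμ : ∀ X ∈ L, X ≠ ⊤ → ∑ Y ∈ L.filter (fun Y => X ≤ Y), μ Y = 0)
    -- `χ` is the characteristic polynomial of the arrangement
    (χ : Polynomial ℤ)
    (hχ : χ = ∑ X ∈ L, Polynomial.C (μ X) * Polynomial.X ^ (Module.finrank K X))
    -- all the coefficients `cᵢ` of the expansion `χ = ∑ᵢ cᵢ (t-1)^i` are nonnegative
    (hc : ∀ i, 0 ≤ (χ.comp (Polynomial.X + 1)).coeff i) :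
    n = ℓ ∧ LinearIndependent K f := by
  classical
  rcases Nat.eq_zero_or_pos ℓ with hl0 | hlpos
  · subst hl0
    have hn : n = 0 := by
      by_contra hn
      have h1 : f ⟨0, Nat.pos_of_ne_zero hn⟩ = 0 := by
        apply LinearMap.ext
        intro x
        rw [Subsingleton.elim x (0 : Fin 0 → K)]
        exact map_zero _
      exact hf0 _ h1
    subst hn
    exact ⟨rfl, linearIndependent_empty_type⟩
  obtain ⟨m, rfl⟩ : ∃ m, ℓ = m + 1 := ⟨ℓ - 1, (Nat.succ_pred_eq_of_pos hlpos).symm⟩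
  have frV : Module.finrank K (Fin (m + 1) → K) = m + 1 := Module.finrank_fin_fun K
  -- basic facts about kernels
  have hker_rank : ∀ i, Module.finrank K (LinearMap.ker (f i)) = m := by
    intro i
    have h1 := LinearMap.finrank_range_add_finrank_ker (f i)
    have h2 : LinearMap.range (f i) = ⊤ := by
      rcases eq_bot_or_eq_top (LinearMap.range (f i)) with h | h
      · exact absurd (LinearMap.range_eq_bot.mp h) (hf0 i)
      · exact h
    rw [h2, finrank_top, Module.finrank_self, frV] at h1
    omega
  have hker_ne_top : ∀ i, LinearMap.ker (f i) ≠ ⊤ := fun i h =>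
    hf0 i (LinearMap.ker_eq_top.mp h)
  have htopL : (⊤ : Submodule K (Fin (m + 1) → K)) ∈ L := by
    rw [hL]
    exact ⟨∅, by simp⟩
  have hkerL : ∀ i, LinearMap.ker (f i) ∈ L := by
    intro i
    rw [hL]
    exact ⟨{i}, by simp⟩
  have hker_inj : Function.Injective fun i => LinearMap.ker (f i) := by
    intro i j hij
    by_contra hne
    simp only at hij
    obtain ⟨c, hc'⟩ := aux_exists_smul_eq_of_ker_le (f i) (f j) (hf0 j) hij.ge
    exact hfp i j hne c hc'
  -- elements of L of dimension m are exactly the kernels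
  have hX_m : ∀ X ∈ L, Module.finrank K X = m → ∃ i, X = LinearMap.ker (f i) := by
    intro X hX hrk
    obtain ⟨S, rfl⟩ := (hL X).mp hX
    rcases S.eq_empty_or_nonempty with rfl | ⟨i, hi⟩
    · exfalso
      have h0 : (⨅ j ∈ (∅ : Finset (Fin n)), LinearMap.ker (f j)) = ⊤ := by simp
      rw [h0, finrank_top, frV] at hrk
      omega
    · refine ⟨i, ?_⟩
      have hle : (⨅ j ∈ S, LinearMap.ker (f j)) ≤ LinearMap.ker (f i) := biInf_le _ hi
      exact Submodule.eq_of_le_of_finrank_eq hle (by rw [hrk, hker_rank])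
  -- compute μ of a kernel
  have hμker : ∀ i, μ (LinearMap.ker (f i)) = -1 := by
    intro i
    have hfil : L.filter (fun Y => LinearMap.ker (f i) ≤ Y)
        = {LinearMap.ker (f i), ⊤} := by
      ext Y
      simp only [Finset.mem_filter, Finset.mem_insert, Finset.mem_singleton]
      constructor
      · rintro ⟨hYL, hYle⟩
        obtain ⟨S, rfl⟩ := (hL Y).mp hYL
        rcases S.eq_empty_or_nonempty with rfl | ⟨j, hj⟩
        · right; simp
        · left
          have hle : (⨅ k ∈ S, LinearMap.ker (f k)) ≤ LinearMap.ker (f j) := biInf_le _ hj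
          have hkk : LinearMap.ker (f i) ≤ LinearMap.ker (f j) := le_trans hYle hle
          have hij : j = i := by
            by_contra hne
            obtain ⟨c, hc'⟩ := aux_exists_smul_eq_of_ker_le (f j) (f i) (hf0 i) hkk
            exact hfp j i hne c hc'
          subst hij
          exact le_antisymm (hle) hYle
      · rintro (rfl | rfl)
        · exact ⟨hkerL i, le_refl _⟩
        · exact ⟨htopL, le_top⟩
    have hsum := hμ _ (hkerL i) (hker_ne_top i)
    rw [hfil, Finset.sum_pair (hker_ne_top i)] at hsum
    omega
  -- compute the Taylor coefficient c_m
  have hcomp : χ.comp (Polynomial.X + 1)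
      = ∑ X ∈ L, Polynomial.C (μ X) * (Polynomial.X + 1) ^ (Module.finrank K X) := by
    rw [hχ, Polynomial.comp, Polynomial.eval₂_finset_sum]
    refine Finset.sum_congr rfl fun X _ => ?_
    rw [Polynomial.eval₂_mul, Polynomial.eval₂_C, Polynomial.eval₂_X_pow]
  have hcm : (χ.comp (Polynomial.X + 1)).coeff m
      = ∑ X ∈ L, μ X * ((Module.finrank K X).choose m : ℤ) := by
    rw [hcomp, Polynomial.finset_sum_coeff]
    refine Finset.sum_congr rfl fun X _ => ?_
    rw [Polynomial.coeff_C_mul, Polynomial.coeff_X_add_one_pow]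
  -- identify the relevant part of L
  have hrk_le : ∀ X ∈ L, Module.finrank K X ≤ m + 1 := by
    intro X _
    have := Submodule.finrank_le X
    omega
  have hfilter : L.filter (fun X : Submodule K (Fin (m + 1) → K) => m ≤ Module.finrank K X)
      = insert ⊤ (Finset.image (fun i => LinearMap.ker (f i)) Finset.univ) := by
    ext X
    simp only [Finset.mem_filter, Finset.mem_insert, Finset.mem_image, Finset.mem_univ,
      true_and]
    constructor
    · rintro ⟨hXL, hXrk⟩
      have hle := hrk_le X hXL
      have hcases : Module.finrank K X = m ∨ Module.finrank K X = m + 1 := by omega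
      rcases hcases with h | h
      · right
        obtain ⟨i, hi⟩ := hX_m X hXL h
        exact ⟨i, hi.symm⟩
      · left
        exact Submodule.eq_top_of_finrank_eq (by rw [h, frV])
    · rintro (rfl | ⟨i, rfl⟩)
      · exact ⟨htopL, by rw [finrank_top, frV]; omega⟩
      · exact ⟨hkerL i, by rw [hker_rank]⟩
  have hsum_split : ∑ X ∈ L, μ X * ((Module.finrank K X).choose m : ℤ)
      = ∑ X ∈ L.filter (fun X : Submodule K (Fin (m + 1) → K) => m ≤ Module.finrank K X),
          μ X * ((Module.finrank K X).choose m : ℤ) := by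
    refine (Finset.sum_filter_of_ne ?_).symm
    intro X _ hne
    by_contra hlt
    push_neg at hlt
    rw [Nat.choose_eq_zero_of_lt hlt] at hne
    simp at hne
  have htop_notmem : (⊤ : Submodule K (Fin (m + 1) → K)) ∉
      Finset.image (fun i => LinearMap.ker (f i)) Finset.univ := by
    simp only [Finset.mem_image, Finset.mem_univ, true_and, not_exists]
    exact fun i h => hker_ne_top i h
  have hcval : (χ.comp (Polynomial.X + 1)).coeff m = (m + 1 : ℤ) - n := by
    rw [hcm, hsum_split, hfilter, Finset.sum_insert htop_notmem,
      Finset.sum_image (fun a _ b _ h => hker_inj h)]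
    have h1 : Module.finrank K (⊤ : Submodule K (Fin (m + 1) → K)) = m + 1 := by
      rw [finrank_top, frV]
    rw [h1, hμtop, Nat.choose_succ_self_right]
    have h2 : ∀ i : Fin n, μ (LinearMap.ker (f i)) *
        ((Module.finrank K (LinearMap.ker (f i))).choose m : ℤ) = -1 := by
      intro i
      rw [hker_rank, hμker, Nat.choose_self]
      ring
    rw [Finset.sum_congr rfl fun i _ => h2 i]
    simp
    ring
  -- n ≤ m + 1
  have hn_le : (n : ℤ) ≤ m + 1 := by
    have := hc m
    rw [hcval] at this
    omega
  -- n ≥ m + 1 from essentiality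
  have hn_ge : m + 1 ≤ n := by
    have hinj : Function.Injective (LinearMap.pi f) := by
      rw [← LinearMap.ker_eq_bot, LinearMap.ker_pi, hess]
    have := LinearMap.finrank_le_finrank_of_injective hinj
    rw [frV, Module.finrank_fin_fun] at this
    exact this
  have hn : n = m + 1 := by omega
  subst hn
  refine ⟨rfl, ?_⟩
  -- linear independence
  have hinj : Function.Injective (LinearMap.pi f) := by
    rw [← LinearMap.ker_eq_bot, LinearMap.ker_pi, hess]
  have hsurj : Function.Surjective (LinearMap.pi f) :=
    LinearMap.injective_iff_surjective.mp hinj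
  rw [Fintype.linearIndependent_iff]
  intro g hg j
  obtain ⟨x, hx⟩ := hsurj (Pi.single j (1 : K))
  have h1 : (∑ i, g i • f i) x = 0 := by rw [hg]; rfl
  have h2 : ∀ i, f i x = (Pi.single j (1 : K) : Fin (m + 1) → K) i := by
    intro i
    have h3 := congrFun hx i
    simpa [LinearMap.pi_apply] using h3
  simp only [LinearMap.sum_apply, LinearMap.smul_apply, smul_eq_mul] at h1
  rw [Finset.sum_congr rfl fun i _ => by rw [h2 i]] at h1
  simpa [Pi.single_apply, mul_ite] using h1
end

section
/- Let K be a field, ℓ ≥ 1, and let f₁,…,fₙ ∈ K[x₁,…,x_ℓ] be nonzero homogeneous linear forms that are pairwise non-proportional. If there exists an injective K-algebra homomorphism from the localization K[x₁,…,x_ℓ][1/(f₁·f₂⋯fₙ)] into the Laurent polynomial ring K[t₁^{±1},…,t_ℓ^{±1}], then the forms f₁,…,fₙ are linearly independent over K. -/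
/-!
A unit of the group algebra `K[ℤ^ℓ]` is a monomial `c • t^a`: in a product `u * v` the sums
`a + b` attained uniquely from the supports of `u` and `v` contribute nonzero monomials, and
`ℤ^ℓ` has two of them as soon as `u` or `v` is not a monomial. Since the embedding makes every
`f i` a unit, the images of the `f i` are monomials; as the `f i` are pairwise non-proportional
and the embedding is injective, these monomials have distinct exponents, hence are linearly
independent.
-/

open Finset

namespace AddMonoidAlgebra

variable {R A : Type*} [Semiring R] [NoZeroDivisors R]

theorem card_support_mul_card_support_le_one_of_mul_eq_single [Add A] [TwoUniqueSums A]
    {u v : AddMonoidAlgebra R A} {c : A} {r : R} (huv : u * v = single c r) :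
    #u.coeff.support * #v.coeff.support ≤ 1 := by
  by_contra! hcard
  obtain ⟨p, hp, q, hq, hpq, hup, huq⟩ := TwoUniqueSums.uniqueAdd_of_one_lt_card hcard
  rw [mem_product] at hp hq
  have unique_sum_eq {x y : A} (hx : x ∈ u.coeff.support) (hy : y ∈ v.coeff.support)
      (hxy : UniqueAdd u.coeff.support v.coeff.support x y) : x + y = c := by
    by_contra hne
    have := coeff_mul_add_of_uniqueAdd hxy
    rw [huv, coeff_single, Finsupp.single_eq_of_ne hne] at this
    exact mul_ne_zero (Finsupp.mem_support_iff.1 hx) (Finsupp.mem_support_iff.1 hy) this.symm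
  obtain ⟨h1, h2⟩ := hup hq.1 hq.2
    ((unique_sum_eq hq.1 hq.2 huq).trans (unique_sum_eq hp.1 hp.2 hup).symm)
  exact hpq (Prod.ext h1 h2).symm

theorem exists_eq_single_of_isUnit [Nontrivial R] [AddMonoid A] [TwoUniqueSums A]
    {u : AddMonoidAlgebra R A} (hu : IsUnit u) : ∃ a r, r ≠ 0 ∧ u = single a r := by
  obtain ⟨v, huv⟩ := hu.exists_right_inv
  have hcard := card_support_mul_card_support_le_one_of_mul_eq_single (huv.trans one_def)
  have hu0 : u.coeff.support.Nonempty := by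
    rw [Finsupp.support_nonempty_iff, Ne, coeff_eq_zero]
    exact left_ne_zero_of_mul_eq_one huv
  have hv0 : v.coeff.support.Nonempty := by
    rw [Finsupp.support_nonempty_iff, Ne, coeff_eq_zero]
    exact right_ne_zero_of_mul_eq_one huv
  obtain ⟨a, ha, hua⟩ := Finsupp.card_support_eq_one.1
    (le_antisymm (le_of_mul_le_of_one_le_left hcard hv0.card_pos) hu0.card_pos)
  exact ⟨a, u.coeff a, ha, coeff_injective (by rwa [coeff_single])⟩

theorem linearIndependent_single {K ι : Type*} [DivisionRing K] {a : ι → A}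
    (ha : Function.Injective a) {c : ι → K} (hc : ∀ i, c i ≠ 0) :
    LinearIndependent K fun i ↦ single (a i) (c i) := by
  convert ((basis A K).linearIndependent.comp a ha).units_smul fun i ↦ Units.mk0 (c i) (hc i)
  simp [smul_single]

end AddMonoidAlgebra

theorem linearIndependent_of_embedding_into_laurent_general
    {K : Type*} [Field K] (ℓ n : ℕ)
    (f : Fin n → MvPolynomial (Fin ℓ) K)
    (hf0 : ∀ i, f i ≠ 0)
    (hfp : ∀ i j, i ≠ j → ∀ c : K, f i ≠ c • f j)
    (φ : Localization.Away (∏ i, f i) →ₐ[K] AddMonoidAlgebra K (Fin ℓ → ℤ))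
    (hφ : Function.Injective φ) :
    LinearIndependent K f := by
  set L := Localization.Away (∏ i, f i)
  let ψ := φ.comp (IsScalarTower.toAlgHom K (MvPolynomial (Fin ℓ) K) L)
  have hprod : ∏ i, f i ≠ 0 := prod_ne_zero_iff.2 fun i _ ↦ hf0 i
  have hψ : Function.Injective ψ :=
    hφ.comp (IsLocalization.injective L (powers_le_nonZeroDivisors_of_noZeroDivisors hprod))
  have hunit (i : Fin n) : IsUnit (ψ (f i)) :=
    (isUnit_of_dvd_unit (map_dvd _ (dvd_prod_of_mem f (mem_univ i)))
      (IsLocalization.Away.algebraMap_isUnit _)).map φ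
  choose a c hc hsingle using fun i ↦ AddMonoidAlgebra.exists_eq_single_of_isUnit (hunit i)
  have ha : Function.Injective a := by
    intro i j hij
    by_contra hne
    refine hfp i j hne (c i / c j) (hψ ?_)
    rw [map_smul, hsingle, hsingle, AddMonoidAlgebra.smul_single, hij, smul_eq_mul,
      div_mul_cancel₀ _ (hc j)]
  refine LinearIndependent.of_comp ψ.toLinearMap ?_
  rw [show ψ.toLinearMap ∘ f = _ from funext hsingle]
  exact AddMonoidAlgebra.linearIndependent_single ha hc

/-- If the coordinate ring `K[x₁,…,x_ℓ][1/(f₁⋯fₙ)]` of the complement of the hyperplane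
arrangement defined by nonzero pairwise non-proportional linear forms `f₁,…,fₙ` embeds
as a `K`-algebra into the Laurent polynomial ring `K[t₁^±1,…,t_ℓ^±1]`, then the forms
`f₁,…,fₙ` are linearly independent over `K`. -/
theorem linearIndependent_of_embedding_into_laurent
    {K : Type*} [Field K] (ℓ n : ℕ) (hℓ : 1 ≤ ℓ)
    (f : Fin n → MvPolynomial (Fin ℓ) K)
    (hhom : ∀ i, (f i).IsHomogeneous 1)
    (hf0 : ∀ i, f i ≠ 0)
    (hfp : ∀ i j, i ≠ j → ∀ c : K, f i ≠ c • f j)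
    (φ : Localization.Away (∏ i, f i) →ₐ[K] AddMonoidAlgebra K (Fin ℓ → ℤ))
    (hφ : Function.Injective φ) :
    LinearIndependent K f :=
  linearIndependent_of_embedding_into_laurent_general ℓ n f hf0 hfp φ hφ
end

section
/- Let K be a field, let Γ be a finite directed multigraph with boundary map ∂ : K^E → K^V and cycle space H₁(Γ) = ker ∂, and for each edge e let η_e : H₁(Γ) → K be the restriction of the e-th coordinate functional. Then the number of distinct hyperplanes |A_Γ| = |{ker η_e : e ∈ E, η_e ≠ 0}| equals b₁(Γ) = dim_K H₁(Γ) if and only if H₁(Γ) admits a K-basis C₁,…,C_b whose supports are pairwise disjoint, i.e., for i ≠ j there is no edge e with Cᵢ(e) ≠ 0 and Cⱼ(e) ≠ 0 (a separated basis). -/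
/-- The boundary map `∂ : K^E → K^V` of a directed multigraph, sending the basis
vector of an edge `e` to `(indicator of t e) - (indicator of s e)`. -/
noncomputable def graphBoundary (K : Type*) [Field K] {V E : Type*} [Fintype E]
    [DecidableEq V] (s t : E → V) : (E → K) →ₗ[K] (V → K) :=
  ∑ e : E, (LinearMap.proj e : (E → K) →ₗ[K] K).smulRight
    (fun v => (if t e = v then (1 : K) else 0) - (if s e = v then 1 else 0))

/-- The restriction to a subspace `W ⊆ K^E` of the `e`-th coordinate functional. -/
noncomputable def coordRestrict {K E : Type*} [Field K] (W : Submodule K (E → K)) (e : E) :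
    W →ₗ[K] K := (LinearMap.proj e).comp W.subtype

/-!
The coordinate functionals `η_e` jointly separate the points of `H₁`. If `C` is a separated
basis, every nonzero `η_e` vanishes on all but one `Cᵢ`, so it is a multiple of the coordinate
functional `Cᵢ*`; every `Cᵢ*` arises this way, hence the distinct hyperplanes are exactly the `b`
kernels `ker Cᵢ*`. Conversely, if there are exactly `n = dim H₁` distinct hyperplanes
`ker f₁, …, ker fₙ`, their intersection is the common kernel of all `η_e`, which is `0`, so
`(f₁, …, fₙ) : H₁ → Kⁿ` is an isomorphism. The preimage of the standard basis is a basis `C`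
with `f_j(Cᵢ) = 0` for `i ≠ j`, and a nonzero `η_e` with `ker η_e = ker f_k` vanishes on every
`Cᵢ` with `i ≠ k`.
-/

open Module LinearMap

section Arrangement

variable {K W E : Type*} [Field K] [AddCommGroup W] [Module K W]

def kerArrangement (η : E → W →ₗ[K] K) : Set (Submodule K W) :=
  {X | ∃ e, η e ≠ 0 ∧ X = ker (η e)}

def IsSeparatedBasis {ι : Type*} (η : E → W →ₗ[K] K) (C : Basis ι K W) : Prop :=
  ∀ i j, i ≠ j → ∀ e, η e (C i) = 0 ∨ η e (C j) = 0

theorem finite_kerArrangement [Finite E] (η : E → W →ₗ[K] K) : (kerArrangement η).Finite :=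
  (Set.finite_range fun e => ker (η e)).subset fun _ ⟨e, _, hX⟩ => ⟨e, hX.symm⟩

theorem Module.Basis.eq_smul_coord_of_forall_ne {ι : Type*} (C : Basis ι K W) (g : W →ₗ[K] K)
    (i : ι) (hg : ∀ j, j ≠ i → g (C j) = 0) : g = g (C i) • C.coord i := by
  refine C.ext fun j => ?_
  rcases eq_or_ne j i with rfl | hji
  · simp
  · simp [hg j hji, hji]

theorem Module.Basis.ker_coord_injective {ι : Type*} (C : Basis ι K W) :
    Function.Injective fun i => ker (C.coord i) := by
  intro i j (hij : ker (C.coord i) = ker (C.coord j))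
  by_contra hne
  have hj : C j ∈ ker (C.coord i) := by simp [Ne.symm hne]
  rw [hij] at hj
  simp at hj

theorem exists_basis_apply_eq_zero_of_iInf_ker_eq_bot [FiniteDimensional K W] {n : ℕ}
    (f : Fin n → W →ₗ[K] K) (hf : ⨅ k, ker (f k) = ⊥) (hn : n = finrank K W) :
    ∃ C : Basis (Fin n) K W, ∀ i j, i ≠ j → f j (C i) = 0 := by
  have hinj : Function.Injective (pi f) := by rw [← ker_eq_bot, ker_pi, hf]
  let φ := linearEquivOfInjective (pi f) hinj (by simp [hn])
  refine ⟨(Pi.basisFun K (Fin n)).map φ.symm, fun i j hij => ?_⟩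
  have : f j (φ.symm (Pi.single i 1)) = (φ (φ.symm (Pi.single i 1))) j := rfl
  simp [this, Ne.symm hij]

variable {η : E → W →ₗ[K] K}

theorem kerArrangement_eq_range_ker_coord (hη : ⨅ e, ker (η e) = ⊥) {ι : Type*}
    {C : Basis ι K W} (hC : IsSeparatedBasis η C) :
    kerArrangement η = Set.range fun i => ker (C.coord i) := by
  have ker_eq {e i} (hei : η e (C i) ≠ 0) : ker (η e) = ker (C.coord i) := by
    have hne : ∀ j, j ≠ i → η e (C j) = 0 := fun j hji => (hC j i hji e).resolve_right hei
    rw [C.eq_smul_coord_of_forall_ne (η e) i hne, ker_smul _ _ hei]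
  ext X
  constructor
  · rintro ⟨e, he, rfl⟩
    obtain ⟨i, hi⟩ : ∃ i, η e (C i) ≠ 0 := by
      by_contra! h
      exact he (C.ext fun i => by simp [h i])
    exact ⟨i, (ker_eq hi).symm⟩
  · rintro ⟨i, rfl⟩
    obtain ⟨e, he⟩ : ∃ e, η e (C i) ≠ 0 := by
      by_contra! h
      exact C.ne_zero i <| (Submodule.mem_bot K).1 <| hη ▸ (Submodule.mem_iInf _).2 fun e => h e
    exact ⟨e, fun h => he (by simp [h]), (ker_eq he).symm⟩

theorem ncard_kerArrangement_of_isSeparatedBasis (hη : ⨅ e, ker (η e) = ⊥) {b : ℕ}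
    {C : Basis (Fin b) K W} (hC : IsSeparatedBasis η C) :
    (kerArrangement η).ncard = finrank K W := by
  rw [kerArrangement_eq_range_ker_coord hη hC, Set.ncard_range_of_injective C.ker_coord_injective,
    finrank_eq_card_basis C, Nat.card_eq_fintype_card]

theorem exists_isSeparatedBasis_of_ncard_kerArrangement [Finite E] [FiniteDimensional K W]
    (hη : ⨅ e, ker (η e) = ⊥) (hcard : (kerArrangement η).ncard = finrank K W) :
    ∃ (b : ℕ) (C : Basis (Fin b) K W), IsSeparatedBasis η C := by
  obtain ⟨n, H, hHinj, hH⟩ := (finite_kerArrangement η).fin_param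
  have hn : n = finrank K W := by
    rw [← hcard, ← hH, Set.ncard_range_of_injective hHinj, Nat.card_fin]
  have hHmem k : H k ∈ kerArrangement η := hH ▸ Set.mem_range_self k
  choose rep _ hHrep using hHmem
  have hkernel {e} (he : η e ≠ 0) : ∃ k, ker (η e) = ker (η (rep k)) := by
    obtain ⟨k, hk⟩ : ker (η e) ∈ Set.range H := hH ▸ ⟨e, he, rfl⟩
    exact ⟨k, hk ▸ hHrep k⟩
  have hbot : ⨅ k, ker (η (rep k)) = ⊥ := by
    refine eq_bot_iff.2 fun x hx => hη ▸ Submodule.mem_iInf _ |>.2 fun e => ?_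
    by_cases he : η e = 0
    · simp [he]
    · obtain ⟨k, hk⟩ := hkernel he
      exact hk ▸ (Submodule.mem_iInf _).1 hx k
  obtain ⟨C, hC⟩ := exists_basis_apply_eq_zero_of_iInf_ker_eq_bot _ hbot hn
  refine ⟨n, C, fun i j hij e => ?_⟩
  by_cases he : η e = 0
  · simp [he]
  obtain ⟨k, hk⟩ := hkernel he
  have hvanish {i} (hik : i ≠ k) : η e (C i) = 0 := by
    rw [← mem_ker, hk, mem_ker]
    exact hC i k hik
  rcases eq_or_ne i k with rfl | hik
  · exact .inr (hvanish hij.symm)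
  · exact .inl (hvanish hik)

theorem ncard_kerArrangement_eq_finrank_iff [Finite E] [FiniteDimensional K W]
    (hη : ⨅ e, ker (η e) = ⊥) :
    (kerArrangement η).ncard = finrank K W ↔
      ∃ (b : ℕ) (C : Basis (Fin b) K W), IsSeparatedBasis η C :=
  ⟨exists_isSeparatedBasis_of_ncard_kerArrangement hη,
    fun ⟨_, _, hC⟩ => ncard_kerArrangement_of_isSeparatedBasis hη hC⟩

end Arrangement

theorem cycle_space_arrangement_boolean_iff_separated_basis_general
    {K : Type*} [Field K] {E : Type*} [Fintype E]
    (H1 : Submodule K (E → K))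
    (η : E → (H1 →ₗ[K] K)) (hη : ∀ e, η e = coordRestrict H1 e) :
    {X : Submodule K H1 | ∃ e, η e ≠ 0 ∧ X = LinearMap.ker (η e)}.ncard
        = Module.finrank K H1 ↔
      ∃ (b : ℕ) (C : Module.Basis (Fin b) K H1),
        ∀ i j, i ≠ j → ∀ e : E, (C i : E → K) e = 0 ∨ (C j : E → K) e = 0 := by
  have hcoord (e : E) (x : H1) : η e x = (x : E → K) e := by rw [hη]; rfl
  have hsep : ⨅ e, ker (η e) = ⊥ :=
    eq_bot_iff.2 fun x hx => Subtype.ext <| funext fun e => by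
      simpa [hcoord] using (Submodule.mem_iInf _).1 hx e
  exact (ncard_kerArrangement_eq_finrank_iff hsep).trans (by simp only [IsSeparatedBasis, hcoord])

/-- For a finite directed multigraph `Γ`, the number of distinct hyperplanes of the
arrangement `A_Γ` in the cycle space `H₁(Γ) = ker ∂` equals `b₁(Γ) = dim_K H₁(Γ)` if and
only if `H₁(Γ)` admits a basis of cycles whose supports are pairwise disjoint
(a separated basis). -/
theorem cycle_space_arrangement_boolean_iff_separated_basis
    {K : Type*} [Field K] {V E : Type*} [Fintype V] [Fintype E] [DecidableEq V]
    (s t : E → V)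
    (H1 : Submodule K (E → K)) (hH1 : H1 = LinearMap.ker (graphBoundary K s t))
    (η : E → (H1 →ₗ[K] K)) (hη : ∀ e, η e = coordRestrict H1 e) :
    {X : Submodule K H1 | ∃ e, η e ≠ 0 ∧ X = LinearMap.ker (η e)}.ncard
        = Module.finrank K H1 ↔
      ∃ (b : ℕ) (C : Module.Basis (Fin b) K H1),
        ∀ i j, i ≠ j → ∀ e : E, (C i : E → K) e = 0 ∨ (C j : E → K) e = 0 :=
  cycle_space_arrangement_boolean_iff_separated_basis_general H1 η hη
end

section
/- Let K be a field, E a finite type, and W ⊆ K^E a K-linear subspace. For each e ∈ E let η_e : W → K be the restriction to W of the e-th coordinate functional. Then the number of distinct hyperplanes |{ker η_e : e ∈ E, η_e ≠ 0}| equals dim_K W if and only if W admits a K-basis w₁,…,w_d whose supports {e : wᵢ(e) ≠ 0} are pairwise disjoint. -/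
/-!
The coordinate functionals form a family `f : E → V*` separating the points of `V = W`.
If `w` is a basis with disjoint supports, every nonzero `f e` is a nonzero multiple of a single
coordinate form `w.coord i`, and every `w.coord i` occurs, so the hyperplanes are exactly the
`d` distinct kernels `ker (w.coord i)`. Conversely, if there are exactly `dim V` hyperplanes,
pick one functional `f e` for each of them. Each `f e` vanishes on the intersection of their
kernels, so these `dim V` functionals span `V*` and form a basis of it; the dual basis of `V`
then has disjoint supports, because a nonzero `f e` vanishes on all but one of its vectors.
-/

open Module LinearMap

section

variable {K V E ι : Type*} [Field K] [AddCommGroup V] [Module K V]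

namespace Module.Basis

theorem eq_apply_smul_coord (b : Basis ι K V) (g : Dual K V) {i : ι}
    (h : ∀ j, j ≠ i → g (b j) = 0) : g = g (b i) • b.coord i := by
  refine b.ext fun j => ?_
  rcases eq_or_ne j i with rfl | hji
  · simp
  · simp [h j hji, hji]

theorem ker_coord_injective_s11 (b : Basis ι K V) : Function.Injective fun i => ker (b.coord i) := by
  intro i j hij
  by_contra hne
  have hi : b i ∈ ker (b.coord j) := by simp [Ne.symm hne]
  simp [← show ker (b.coord i) = ker (b.coord j) from hij] at hi

theorem exists_coord_eq [FiniteDimensional K V] [Finite ι] (b : Basis ι K (Dual K V)) :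
    ∃ w : Basis ι K V, ∀ i, w.coord i = b i := by
  classical
  let w := b.dualBasis.map (evalEquiv K V).symm
  refine ⟨w, fun i => w.ext fun j => ?_⟩
  rw [coord_apply, repr_self, map_apply, apply_evalEquiv_symm_apply, dualBasis_apply_self,
    Finsupp.single_apply]
  exact if_congr eq_comm rfl rfl

end Module.Basis

def hyperplaneArrangement (f : E → Dual K V) : Set (Submodule K V) :=
  {X | ∃ e, f e ≠ 0 ∧ X = ker (f e)}

theorem hyperplaneArrangement_eq_range_ker_coord {f : E → Dual K V}
    (hf : ∀ v, v ≠ 0 → ∃ e, f e v ≠ 0) (w : Basis ι K V)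
    (hw : ∀ i j, i ≠ j → ∀ e, f e (w i) = 0 ∨ f e (w j) = 0) :
    hyperplaneArrangement f = Set.range fun i => ker (w.coord i) := by
  have ker_eq : ∀ e i, f e (w i) ≠ 0 → ker (f e) = ker (w.coord i) := fun e i hi => by
    rw [w.eq_apply_smul_coord (f e) fun j hji => (hw j i hji e).resolve_right hi, ker_smul _ _ hi]
  ext X
  constructor
  · rintro ⟨e, he, rfl⟩
    obtain ⟨i, hi⟩ : ∃ i, f e (w i) ≠ 0 := by
      by_contra! h
      exact he (w.ext fun i => h i)
    exact ⟨i, (ker_eq e i hi).symm⟩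
  · rintro ⟨i, rfl⟩
    obtain ⟨e, he⟩ := hf (w i) (w.ne_zero i)
    exact ⟨e, fun h => he (by simp [h]), (ker_eq e i he).symm⟩

theorem apply_eq_zero_or_apply_eq_zero_of_ker_eq_ker_coord {f : E → Dual K V} (w : Basis ι K V)
    (h : ∀ e, f e ≠ 0 → ∃ i, ker (f e) = ker (w.coord i)) :
    ∀ i j, i ≠ j → ∀ e, f e (w i) = 0 ∨ f e (w j) = 0 := by
  intro i j hij e
  by_cases he : f e = 0
  · simp [he]
  obtain ⟨k, hk⟩ := h e he
  have vanish : ∀ l, l ≠ k → f e (w l) = 0 := fun l hl => by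
    have : w l ∈ ker (w.coord k) := by simp [hl]
    rwa [← hk] at this
  rcases eq_or_ne i k with rfl | hik
  · exact .inr (vanish j hij.symm)
  · exact .inl (vanish i hik)

theorem exists_basis_ker_coord_eq [FiniteDimensional K V] [Finite E] {f : E → Dual K V}
    (hf : ∀ v, v ≠ 0 → ∃ e, f e v ≠ 0)
    (hcard : (hyperplaneArrangement f).ncard = finrank K V) :
    ∃ w : Basis (hyperplaneArrangement f) K V, ∀ X, ker (w.coord X) = X := by
  set S := hyperplaneArrangement f
  have hS : S.Finite :=
    (Set.finite_range fun e => ker (f e)).subset fun X ⟨e, _, hX⟩ => ⟨e, hX.symm⟩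
  have : Fintype S := hS.fintype
  choose ε _ hε using fun X : S => X.2
  have hspan : ⊤ ≤ Submodule.span K (Set.range fun X => f (ε X)) := by
    rw [← Submodule.span_eq_top_of_ne_zero (s := Set.range f) fun v hv =>
      let ⟨e, he⟩ := hf v hv; ⟨f e, ⟨e, rfl⟩, he⟩, Submodule.span_le]
    rintro _ ⟨e, rfl⟩
    refine mem_span_of_iInf_ker_le_ker ?_
    by_cases he : f e = 0
    · simp [he]
    · exact iInf_le_of_le ⟨_, e, he, rfl⟩ (hε _).ge
  have hcard_dual : Fintype.card S = finrank K (Dual K V) := by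
    rw [Subspace.dual_finrank_eq, ← hcard, Set.ncard_eq_toFinset_card', Set.toFinset_card]
  obtain ⟨w, hw⟩ := (basisOfTopLeSpanOfCardEqFinrank _ hspan hcard_dual).exists_coord_eq
  refine ⟨w, fun X => ?_⟩
  rw [hw, coe_basisOfTopLeSpanOfCardEqFinrank, ← hε]

theorem ncard_hyperplaneArrangement_eq_finrank_iff [FiniteDimensional K V] [Finite E]
    {f : E → Dual K V} (hf : ∀ v, v ≠ 0 → ∃ e, f e v ≠ 0) :
    (hyperplaneArrangement f).ncard = finrank K V ↔
      ∃ (d : ℕ) (w : Basis (Fin d) K V), ∀ i j, i ≠ j → ∀ e, f e (w i) = 0 ∨ f e (w j) = 0 := by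
  constructor
  · intro hcard
    obtain ⟨w, hw⟩ := exists_basis_ker_coord_eq hf hcard
    have hsep := apply_eq_zero_or_apply_eq_zero_of_ker_eq_ker_coord w fun e he =>
      ⟨⟨_, e, he, rfl⟩, (hw ⟨_, e, he, rfl⟩).symm⟩
    have := Module.Finite.finite_basis w
    refine ⟨_, w.reindex (Finite.equivFin _), fun i j hij e => ?_⟩
    simpa only [Basis.reindex_apply] using hsep _ _ ((Finite.equivFin _).symm.injective.ne hij) e
  · rintro ⟨d, w, hw⟩
    rw [hyperplaneArrangement_eq_range_ker_coord hf w hw,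
      Set.ncard_range_of_injective w.ker_coord_injective_s11, finrank_eq_nat_card_basis w]

end

/-- For a subspace `W ⊆ K^E` (`E` finite), the number of distinct hyperplanes
`{ker η_e : η_e ≠ 0}` cut out on `W` by the coordinate functionals equals `dim_K W`
if and only if `W` admits a basis whose members have pairwise disjoint supports. -/
theorem coord_arrangement_boolean_iff_separated_basis
    {K : Type*} [Field K] {E : Type*} [Fintype E]
    (W : Submodule K (E → K))
    (η : E → (W →ₗ[K] K)) (hη : ∀ e, η e = coordRestrict W e) :
    {X : Submodule K W | ∃ e, η e ≠ 0 ∧ X = LinearMap.ker (η e)}.ncard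
        = Module.finrank K W ↔
      ∃ (d : ℕ) (w : Module.Basis (Fin d) K W),
        ∀ i j, i ≠ j → ∀ e : E, (w i : E → K) e = 0 ∨ (w j : E → K) e = 0 := by
  obtain rfl : η = coordRestrict W := funext hη
  refine ncard_hyperplaneArrangement_eq_finrank_iff fun v hv => ?_
  exact Function.ne_iff.mp fun h => hv (Subtype.ext h)
end
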